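/- arXiv:2411.13646 — 2 statements merged into one kernel-verified Lean document; each statement's English description precedes it below -/
import Mathlib

section
/- Let m ≥ 3. Then u_{Σ_{ar}}(α Σ_{bs}) = u_{Σ_{ar}}(α) for all α ∈ ℤ^{2^m} and all generators, i.e. for all a,b ∈ {1,…,m} and r,s ∈ {1,2}. -/
open Matrix

/-- `bwBit i a` is the `a`-th binary digit of `i`. -/
def bwBit (i a : ℕ) : ℕ := i / 2 ^ a % 2

/-- `bwPar m i` is the number of zero digits in the length-`m` binary expansion of `i`, mod 2. -/
def bwPar (m i : ℕ) : ℕ := ((Finset.range m).filter fun a => bwBit i a = 0).card % 2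

/-- The exponent of `√2` in the `(i,j)` entry of the Gram matrix of `BW(m)`. -/
def bwExp (m i j : ℕ) : ℤ :=
  (bwPar m i : ℤ) + (bwPar m j : ℤ) - 2 * (((m + 1) / 2 : ℕ) : ℤ) +
    ∑ l ∈ Finset.range m,
      (2 * (bwBit i l : ℤ) * (bwBit j l : ℤ) - (bwBit i l : ℤ) - (bwBit j l : ℤ) + 2)

/-- The Gram matrix of the Barnes-Wall lattice `BW(m)`:
`G i j = (w_i, w_j) = √2 ^ (p i + p j - 2⌈m/2⌉ + ∑ (2 i[l] j[l] - i[l] - j[l] + 2))`. -/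
noncomputable def bwGram (m : ℕ) : Matrix (Fin (2 ^ m)) (Fin (2 ^ m)) ℝ :=
  Matrix.of fun i j => Real.sqrt 2 ^ bwExp m (i : ℕ) (j : ℕ)

/-- The matrix of the lattice automorphism `Σ_{ar}` of `BW(m)` in the basis `w_i`
(acting on row vectors from the right); `r = 1` gives `Σ_{a1}`, any other `r` gives `Σ_{a2}`. -/
def bwSigma (m a r : ℕ) : Matrix (Fin (2 ^ m)) (Fin (2 ^ m)) ℤ :=
  Matrix.of fun i j =>
    if r = 1 then
      if bwBit (i : ℕ) (m - a) = 0 then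
        (if j = i then -1 else 0) +
          (if (j : ℕ) = (i : ℕ) + 2 ^ (m - a) then 2 ^ bwPar m (i : ℕ) else 0)
      else if j = i then 1 else 0
    else
      if bwBit (i : ℕ) (m - a) = 1 then
        (if j = i then -1 else 0) +
          (if (j : ℕ) + 2 ^ (m - a) = (i : ℕ) then 2 ^ bwPar m (i : ℕ) else 0)
      else if j = i then 1 else 0

/-- `A_{ar} = Σ_{ar} - I`. -/
def bwA (m a r : ℕ) : Matrix (Fin (2 ^ m)) (Fin (2 ^ m)) ℤ := bwSigma m a r - 1

/-- The half-Gram matrix `H` of `BW(m)`: `H i j = G i j` for `i > j`, `G i i / 2` on the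
diagonal, and `0` above the diagonal. -/
noncomputable def bwH (m : ℕ) : Matrix (Fin (2 ^ m)) (Fin (2 ^ m)) ℝ :=
  Matrix.of fun i j =>
    if j < i then Real.sqrt 2 ^ bwExp m (i : ℕ) (j : ℕ)
    else if i = j then Real.sqrt 2 ^ (bwExp m (i : ℕ) (i : ℕ) - 2)
    else 0

/-- The matrix `H - Σ H Σᵀ` underlying the bilinear form `B_Σ`. -/
noncomputable def bwBMat (m : ℕ) (S : Matrix (Fin (2 ^ m)) (Fin (2 ^ m)) ℤ) :
    Matrix (Fin (2 ^ m)) (Fin (2 ^ m)) ℝ :=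
  bwH m - S.map (Int.cast : ℤ → ℝ) * bwH m * (S.map (Int.cast : ℤ → ℝ))ᵀ

/-- The bilinear form `B_Σ(α, β) = ∑_{i > j} α_i β_j (H - Σ H Σᵀ)_{ij}`. -/
noncomputable def bwBQuad (m : ℕ) (S : Matrix (Fin (2 ^ m)) (Fin (2 ^ m)) ℤ)
    (α β : Fin (2 ^ m) → ℤ) : ℝ :=
  ∑ i, ∑ j, if j < i then (α i : ℝ) * (β j : ℝ) * bwBMat m S i j else 0

/-- `u_Σ(α) = (-1)^{B_Σ(α,α)}`, rendered as `cos (π B_Σ(α,α))`, which agrees with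
`(-1)^k` whenever `B_Σ(α,α)` is the integer `k`. -/
noncomputable def bwU (m : ℕ) (S : Matrix (Fin (2 ^ m)) (Fin (2 ^ m)) ℤ)
    (α : Fin (2 ^ m) → ℤ) : ℝ :=
  Real.cos (Real.pi * bwBQuad m S α α)

/-!
Everything happens modulo 2. For `m ≥ 2` the half-Gram matrix `H` has integer entries (powers
of 2), so `B_Σ(α, α) = ∑_{i > j} α_i α_j C_ij` with `C = H - Σ H Σᵀ` integral, and `u_Σ(α)` only
depends on this integer mod 2. Call an index `i` odd if `p(i) = 1`. Modulo 2 a generator is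
`1 + E`, where `E_ik ≠ 0` forces `p(i) = 0` and `p(k) = 1`: the off-diagonal entry is `2 ^ p(i)`,
and `k` differs from `i` in exactly one binary digit. Moreover `H_kl` is even when `k` and `l`
are both odd. Hence `C_ij` is even as soon as `i` or `j` is odd, while `α Σ_{bs} ≡ α` at every
even index, and the two sums agree term by term modulo 2.
-/

section StrictLowerQuadForm

variable {n R : Type*} [Fintype n] [LT n] [DecidableRel (α := n) (· < ·)]

def strictLowerQuadForm [NonUnitalNonAssocSemiring R] (C : Matrix n n R) (x : n → R) : R :=
  ∑ i, ∑ j, if j < i then x i * x j * C i j else 0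

theorem intCast_strictLowerQuadForm [Ring R] (C : Matrix n n ℤ) (x : n → ℤ) :
    ((strictLowerQuadForm C x : ℤ) : R) =
      strictLowerQuadForm (C.map (Int.cast : ℤ → R)) fun i => (x i : R) := by
  simp only [strictLowerQuadForm, Int.cast_sum, apply_ite (Int.cast : ℤ → R), Int.cast_mul,
    Int.cast_zero, Matrix.map_apply]

theorem strictLowerQuadForm_congr [NonUnitalNonAssocSemiring R] {P : n → Prop} {C : Matrix n n R}
    {x y : n → R} (hC : ∀ i j, P i ∨ P j → C i j = 0) (hxy : ∀ i, ¬P i → x i = y i) :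
    strictLowerQuadForm C x = strictLowerQuadForm C y := by
  refine Finset.sum_congr rfl fun i _ => Finset.sum_congr rfl fun j _ => ?_
  by_cases h : P i ∨ P j
  · simp only [hC i j h, mul_zero, ite_self]
  · rw [not_or] at h
    rw [hxy i h.1, hxy j h.2]

end StrictLowerQuadForm

theorem Matrix.map_sub_mul_mul_transpose {n R R' : Type*} [Fintype n] [Ring R] [Ring R']
    (f : R →+* R') (H M : Matrix n n R) : (H - M * H * Mᵀ).map f = H.map f - M.map f * H.map f * (M.map f)ᵀ := by
  simp [Matrix.map_sub, Matrix.map_mul, Matrix.transpose_map]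

section SupportedPerturbation

variable {n R : Type*} [DecidableEq n] [CommRing R] {P : n → Prop}
  {S : Matrix n n R} (hS : ∀ i k, (S - 1) i k ≠ 0 → ¬P i ∧ P k)
include hS

theorem apply_eq_one_apply_of_support (i k : n) (h : P i ∨ ¬P k) :
    S i k = (1 : Matrix n n R) i k := by
  by_contra hne
  have := hS i k (sub_ne_zero.2 hne)
  tauto

variable [Fintype n]

theorem mul_apply_eq_of_support_left {i : n} (hi : P i) (M : Matrix n n R) (j : n) :
    (S * M) i j = M i j := by
  simp only [Matrix.mul_apply, apply_eq_one_apply_of_support hS i _ (Or.inl hi)]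
  rw [← Matrix.mul_apply, Matrix.one_mul]

theorem mul_apply_eq_of_support_right {H : Matrix n n R} (hH : ∀ k l, P k → P l → H k l = 0)
    (i : n) {j : n} (hj : P j) : (S * H) i j = H i j := by
  have hEH : ((S - 1) * H) i j = 0 := by
    refine Finset.sum_eq_zero fun k _ => ?_
    dsimp only
    by_cases h : (S - 1) i k = 0
    · rw [h, zero_mul]
    · rw [hH k j (hS i k h).2 hj, mul_zero]
  rw [← sub_add_cancel S 1, add_mul, Matrix.add_apply, hEH, Matrix.one_mul, zero_add]

theorem sub_mul_mul_transpose_apply_eq_zero {H : Matrix n n R}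
    (hH : ∀ k l, P k → P l → H k l = 0) {i j : n} (hij : P i ∨ P j) :
    (H - S * H * Sᵀ) i j = 0 := by
  rw [Matrix.sub_apply, sub_eq_zero, eq_comm]
  rcases hij with hi | hj
  · have hHt : ∀ k l, P k → P l → Hᵀ k l = 0 := fun k l hk hl => hH l k hl hk
    calc (S * H * Sᵀ) i j = (H * Sᵀ) i j := by
          rw [Matrix.mul_assoc, mul_apply_eq_of_support_left hS hi]
      _ = (S * Hᵀ) j i := by
          rw [← Matrix.transpose_apply (S * Hᵀ), Matrix.transpose_mul, Matrix.transpose_transpose]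
      _ = H i j := mul_apply_eq_of_support_right hS hHt j hi
  · calc (S * H * Sᵀ) i j = (S * (S * H)ᵀ) j i := by
          rw [← Matrix.transpose_apply (S * (S * H)ᵀ), Matrix.transpose_mul,
            Matrix.transpose_transpose]
      _ = (S * H) i j := mul_apply_eq_of_support_left hS hj _ i
      _ = H i j := mul_apply_eq_of_support_right hS hH i hj

theorem vecMul_apply_eq_of_support (x : n → R) {i : n} (hi : ¬P i) : (x ᵥ* S) i = x i := by
  simp only [Matrix.vecMul, dotProduct, apply_eq_one_apply_of_support hS _ i (Or.inr hi)]
  rw [← dotProduct, ← Matrix.vecMul, Matrix.vecMul_one]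

end SupportedPerturbation

theorem bwBit_lt_two (i a : ℕ) : bwBit i a < 2 := Nat.mod_lt _ two_pos

theorem bwBit_add_two_pow_self_add (i c : ℕ) : bwBit (i + 2 ^ c) c + bwBit i c = 1 := by
  unfold bwBit
  rw [Nat.add_div_right _ (Nat.two_pow_pos c)]
  omega

theorem bwBit_add_two_pow_of_ne {i c l : ℕ} (h : bwBit i c = 0) (hl : l ≠ c) :
    bwBit (i + 2 ^ c) l = bwBit i l := by
  unfold bwBit at *
  rcases Nat.lt_or_gt_of_ne hl with hlc | hcl
  · obtain ⟨d, rfl⟩ := Nat.exists_eq_add_of_lt hlc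
    rw [show 2 ^ (l + d + 1) = 2 ^ l * (2 * 2 ^ d) by ring,
      Nat.add_mul_div_left _ _ (Nat.two_pow_pos l)]
    omega
  · -- no carry: `i / 2 ^ c` is even
    obtain ⟨d, rfl⟩ := Nat.exists_eq_add_of_lt hcl
    simp only [show 2 ^ (c + d + 1) = 2 ^ c * 2 * 2 ^ d by ring, ← Nat.div_div_eq_div_mul,
      Nat.add_div_right _ (Nat.two_pow_pos c)]
    rw [show (i / 2 ^ c + 1) / 2 = i / 2 ^ c / 2 by omega]

theorem bwPar_add_two_pow_add {m i c : ℕ} (hc : c < m) (h : bwBit i c = 0) :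
    bwPar m (i + 2 ^ c) + bwPar m i = 1 := by
  have hmem : c ∈ (Finset.range m).filter fun a => bwBit i a = 0 := by simp [hc, h]
  have hflip : bwBit (i + 2 ^ c) c = 1 := by have := bwBit_add_two_pow_self_add i c; omega
  have hset : ((Finset.range m).filter fun a => bwBit (i + 2 ^ c) a = 0) =
      ((Finset.range m).filter fun a => bwBit i a = 0).erase c := by
    ext l
    by_cases hl : l = c
    · simp [hl, hflip]
    · simp [hl, bwBit_add_two_pow_of_ne h hl]
  have hpos := Finset.card_pos.mpr ⟨c, hmem⟩
  unfold bwPar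
  rw [hset, Finset.card_erase_of_mem hmem]
  omega

theorem bwPar_add_sum_bwBit_mod_two (m i : ℕ) :
    (bwPar m i + ∑ l ∈ Finset.range m, bwBit i l) % 2 = m % 2 := by
  have hsum : ∑ l ∈ Finset.range m, bwBit i l =
      ((Finset.range m).filter fun a => ¬bwBit i a = 0).card := by
    rw [Finset.card_filter]
    refine Finset.sum_congr rfl fun l _ => ?_
    have := bwBit_lt_two i l
    split <;> omega
  have hcard :=
    Finset.card_filter_add_card_filter_not (s := Finset.range m) (p := fun a => bwBit i a = 0)
  rw [Finset.card_range] at hcard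
  unfold bwPar
  omega

theorem even_bwExp (m i j : ℕ) : Even (bwExp m i j) := by
  have hi := bwPar_add_sum_bwBit_mod_two m i
  have hj := bwPar_add_sum_bwBit_mod_two m j
  have hsum : ∑ l ∈ Finset.range m,
        (2 * (bwBit i l : ℤ) * (bwBit j l : ℤ) - (bwBit i l : ℤ) - (bwBit j l : ℤ) + 2) =
      2 * ∑ l ∈ Finset.range m, ((bwBit i l : ℤ) * (bwBit j l : ℤ) + 1)
        - ∑ l ∈ Finset.range m, (bwBit i l : ℤ) - ∑ l ∈ Finset.range m, (bwBit j l : ℤ) := by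
    rw [Finset.mul_sum, ← Finset.sum_sub_distrib, ← Finset.sum_sub_distrib]
    exact Finset.sum_congr rfl fun l _ => by ring
  rw [Int.even_iff, bwExp, hsum]
  zify at hi hj
  omega

theorem bwPar_add_bwPar_le_bwExp_add_one (m i j : ℕ) :
    (bwPar m i : ℤ) + bwPar m j ≤ bwExp m i j + 1 := by
  have hsum : (m : ℤ) ≤ ∑ l ∈ Finset.range m,
      (2 * (bwBit i l : ℤ) * (bwBit j l : ℤ) - (bwBit i l : ℤ) - (bwBit j l : ℤ) + 2) := by
    calc (m : ℤ) = ∑ _l ∈ Finset.range m, (1 : ℤ) := by simp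
      _ ≤ _ := Finset.sum_le_sum fun l _ => by
        have hx := bwBit_lt_two i l
        have hy := bwBit_lt_two j l
        interval_cases bwBit i l <;> interval_cases bwBit j l <;> norm_num
  have hK : (m + 1) / 2 * 2 ≤ m + 1 := Nat.div_mul_le_self _ _
  unfold bwExp
  omega

theorem bwExp_self (m i : ℕ) :
    bwExp m i i = 2 * (bwPar m i : ℤ) + 2 * m - 2 * (((m + 1) / 2 : ℕ) : ℤ) := by
  have hsum : ∑ l ∈ Finset.range m,
      (2 * (bwBit i l : ℤ) * (bwBit i l : ℤ) - (bwBit i l : ℤ) - (bwBit i l : ℤ) + 2) =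
      ∑ _l ∈ Finset.range m, (2 : ℤ) :=
    Finset.sum_congr rfl fun l _ => by
      have := bwBit_lt_two i l
      interval_cases bwBit i l <;> norm_num
  rw [bwExp, hsum, Finset.sum_const, Finset.card_range, nsmul_eq_mul]
  ring

theorem bwExp_nonneg (m i j : ℕ) : 0 ≤ bwExp m i j := by
  have := bwPar_add_bwPar_le_bwExp_add_one m i j
  obtain ⟨k, hk⟩ := even_bwExp m i j
  omega

theorem two_add_two_mul_bwPar_le_bwExp_self {m : ℕ} (hm : 2 ≤ m) (i : ℕ) :
    2 + 2 * (bwPar m i : ℤ) ≤ bwExp m i i := by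
  have hK : (m + 1) / 2 * 2 ≤ m + 1 := Nat.div_mul_le_self _ _
  obtain ⟨k, hk⟩ := even_bwExp m i i
  rw [bwExp_self] at hk ⊢
  omega

-- Since `bwExp` is even, these are the entries of `bwH m` as soon as the diagonal exponents are
-- at least `2`, i.e. for `2 ≤ m`; for smaller `m` the truncated subtraction gives junk.
def bwHZ (m : ℕ) : Matrix (Fin (2 ^ m)) (Fin (2 ^ m)) ℤ :=
  Matrix.of fun i j =>
    if j < i then 2 ^ ((bwExp m i j).toNat / 2)
    else if i = j then 2 ^ ((bwExp m i i).toNat / 2 - 1)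
    else 0

theorem sqrt_two_zpow_of_even {e : ℤ} (he : 0 ≤ e) (he2 : Even e) :
    Real.sqrt 2 ^ e = ((2 ^ (e.toNat / 2) : ℤ) : ℝ) := by
  obtain ⟨k, rfl⟩ : ∃ k : ℕ, e = 2 * k := by obtain ⟨r, hr⟩ := he2; exact ⟨r.toNat, by omega⟩
  rw [show (2 * (k : ℤ)).toNat / 2 = k by omega, _root_.zpow_mul, zpow_natCast, zpow_ofNat,
    Real.sq_sqrt zero_le_two]
  push_cast
  ring

theorem bwH_eq_map_bwHZ {m : ℕ} (hm : 2 ≤ m) : bwH m = (bwHZ m).map (Int.cast : ℤ → ℝ) := by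
  ext i j
  simp only [bwH, bwHZ, Matrix.map_apply, Matrix.of_apply]
  split_ifs with hji hij
  · exact sqrt_two_zpow_of_even (bwExp_nonneg _ _ _) (even_bwExp _ _ _)
  · have hdiag := two_add_two_mul_bwPar_le_bwExp_self hm i
    rw [sqrt_two_zpow_of_even (by omega) ((even_bwExp _ _ _).sub even_two)]
    congr 3
    omega
  · simp

theorem intCast_two_pow_zmod_two {k : ℕ} (hk : k ≠ 0) : (((2 : ℤ) ^ k : ℤ) : ZMod 2) = 0 := by
  rw [Int.cast_pow, Int.cast_ofNat, show (2 : ZMod 2) = 0 from rfl, zero_pow hk]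

theorem bwHZ_intCast_zmod_two_eq_zero {m : ℕ} (hm : 2 ≤ m) {k l : Fin (2 ^ m)}
    (hk : bwPar m k = 1) (hl : bwPar m l = 1) : ((bwHZ m k l : ℤ) : ZMod 2) = 0 := by
  have hoff := bwPar_add_bwPar_le_bwExp_add_one m k l
  have hdiag := two_add_two_mul_bwPar_le_bwExp_self hm k
  obtain ⟨e, he⟩ := even_bwExp m k l
  rw [hk, hl] at hoff
  rw [hk] at hdiag
  simp only [bwHZ, Matrix.of_apply]
  split_ifs with hlk hkl
  · exact intCast_two_pow_zmod_two (by omega)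
  · subst hkl
    exact intCast_two_pow_zmod_two (by omega)
  · simp

theorem bwSigma_apply_self (m a r : ℕ) (i : Fin (2 ^ m)) :
    bwSigma m a r i i = 1 ∨ bwSigma m a r i i = -1 := by
  have := Nat.two_pow_pos (m - a)
  simp only [bwSigma, Matrix.of_apply]
  split_ifs <;> omega

theorem bwSigma_apply_of_ne {m : ℕ} (a r : ℕ) {i k : Fin (2 ^ m)} (hki : k ≠ i) :
    bwSigma m a r i k =
      if (r = 1 ∧ bwBit i (m - a) = 0 ∧ (k : ℕ) = i + 2 ^ (m - a)) ∨
          (r ≠ 1 ∧ bwBit i (m - a) = 1 ∧ (k : ℕ) + 2 ^ (m - a) = i)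
        then 2 ^ bwPar m i else 0 := by
  simp only [bwSigma, Matrix.of_apply, hki, if_false, zero_add]
  split_ifs <;> simp_all

theorem bwPar_eq_zero_of_intCast_two_pow_ne_zero {m i : ℕ}
    (h : (((2 : ℤ) ^ bwPar m i : ℤ) : ZMod 2) ≠ 0) : bwPar m i = 0 := by
  by_contra hne
  exact h (intCast_two_pow_zmod_two hne)

theorem bwSigma_map_sub_one_support {m : ℕ} (a r : ℕ) (i k : Fin (2 ^ m))
    (h : ((bwSigma m a r).map (Int.cast : ℤ → ZMod 2) - 1) i k ≠ 0) :
    ¬bwPar m i = 1 ∧ bwPar m k = 1 := by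
  rw [Matrix.sub_apply, Matrix.map_apply] at h
  by_cases hki : k = i
  · subst hki
    rcases bwSigma_apply_self m a r k with h1 | h1 <;> simp [h1] at h
  rw [Matrix.one_apply_ne' hki, sub_zero, bwSigma_apply_of_ne a r hki] at h
  split_ifs at h with hcase
  · have hi := bwPar_eq_zero_of_intCast_two_pow_ne_zero h
    have hpow (x : Fin (2 ^ m)) (hx : 2 ^ (m - a) ≤ (x : ℕ)) : m - a < m :=
      (Nat.pow_lt_pow_iff_right one_lt_two).1 (hx.trans_lt x.isLt)
    refine ⟨by omega, ?_⟩
    rcases hcase with ⟨-, hbit, hrel⟩ | ⟨-, hbit, hrel⟩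
    · have := bwPar_add_two_pow_add (hpow k (by omega)) hbit
      rw [hrel]
      omega
    · have hbitk : bwBit k (m - a) = 0 := by
        have := bwBit_add_two_pow_self_add k (m - a)
        rw [hrel] at this
        omega
      have := bwPar_add_two_pow_add (hpow i (by omega)) hbitk
      rw [hrel] at this
      omega
  · exact absurd rfl h

theorem bwHZ_sub_conj_bwSigma_intCast_zmod_two {m : ℕ} (hm : 2 ≤ m) (a r : ℕ) {i j : Fin (2 ^ m)}
    (hij : bwPar m i = 1 ∨ bwPar m j = 1) :
    (((bwHZ m - bwSigma m a r * bwHZ m * (bwSigma m a r)ᵀ) i j : ℤ) : ZMod 2) = 0 := by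
  change (bwHZ m - _ * bwHZ m * _).map (Int.castRingHom (ZMod 2)) i j = 0
  rw [Matrix.map_sub_mul_mul_transpose]
  exact sub_mul_mul_transpose_apply_eq_zero (P := fun k : Fin (2 ^ m) => bwPar m k = 1)
    (bwSigma_map_sub_one_support a r)
    (fun k l hk hl => bwHZ_intCast_zmod_two_eq_zero hm hk hl) hij

theorem vecMul_bwSigma_intCast_zmod_two {m : ℕ} (b s : ℕ) (α : Fin (2 ^ m) → ℤ)
    {i : Fin (2 ^ m)} (hi : ¬bwPar m i = 1) :
    (((α ᵥ* bwSigma m b s) i : ℤ) : ZMod 2) = α i := by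
  rw [← eq_intCast (Int.castRingHom (ZMod 2)), RingHom.map_vecMul]
  exact vecMul_apply_eq_of_support (bwSigma_map_sub_one_support b s) _ hi

theorem bwBMat_eq_map {m : ℕ} (hm : 2 ≤ m) (S : Matrix (Fin (2 ^ m)) (Fin (2 ^ m)) ℤ) :
    bwBMat m S = (bwHZ m - S * bwHZ m * Sᵀ).map (Int.cast : ℤ → ℝ) := by
  rw [bwBMat, bwH_eq_map_bwHZ hm]
  exact (Matrix.map_sub_mul_mul_transpose (Int.castRingHom ℝ) _ _).symm

theorem bwU_eq_cos {m : ℕ} (hm : 2 ≤ m) (S : Matrix (Fin (2 ^ m)) (Fin (2 ^ m)) ℤ)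
    (α : Fin (2 ^ m) → ℤ) :
    bwU m S α = Real.cos (Real.pi * strictLowerQuadForm (bwHZ m - S * bwHZ m * Sᵀ) α) := by
  rw [intCast_strictLowerQuadForm, ← bwBMat_eq_map hm]
  rfl

theorem Real.cos_pi_mul_intCast_eq_of_zmod_two {k l : ℤ} (h : (k : ZMod 2) = l) :
    Real.cos (Real.pi * k) = Real.cos (Real.pi * l) := by
  obtain ⟨t, ht⟩ := (ZMod.intCast_eq_intCast_iff_dvd_sub k l 2).1 h
  have hl : Real.pi * l = Real.pi * k + t * (2 * Real.pi) := by
    rw [show l = k + 2 * t by omega]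
    push_cast
    ring
  rw [hl, Real.cos_add_int_mul_two_pi]

theorem bwU_invariant_general (m : ℕ) (hm : 3 ≤ m) (a b r s : ℕ) (α : Fin (2 ^ m) → ℤ) :
    bwU m (bwSigma m a r) (Matrix.vecMul α (bwSigma m b s)) = bwU m (bwSigma m a r) α := by
  rw [bwU_eq_cos (by omega), bwU_eq_cos (by omega)]
  refine Real.cos_pi_mul_intCast_eq_of_zmod_two ?_
  rw [intCast_strictLowerQuadForm, intCast_strictLowerQuadForm]
  exact strictLowerQuadForm_congr (P := fun i : Fin (2 ^ m) => bwPar m i = 1)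
    (fun i j hij => bwHZ_sub_conj_bwSigma_intCast_zmod_two (by omega) a r hij)
    (fun i hi => vecMul_bwSigma_intCast_zmod_two b s α hi)

/-- For `m ≥ 3`, `u_{Σ_{ar}}(α Σ_{bs}) = u_{Σ_{ar}}(α)` for all `α` and all generators. -/
theorem bwU_invariant (m : ℕ) (hm : 3 ≤ m) (a b r s : ℕ)
    (ha : 1 ≤ a) (ha' : a ≤ m) (hb : 1 ≤ b) (hb' : b ≤ m)
    (hr : r = 1 ∨ r = 2) (hs : s = 1 ∨ s = 2) (α : Fin (2 ^ m) → ℤ) :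
    bwU m (bwSigma m a r) (Matrix.vecMul α (bwSigma m b s)) = bwU m (bwSigma m a r) α :=
  bwU_invariant_general m hm a b r s α
end

section
/- Let m ≥ 2. Then ∑_{g ∈ E(m)} χ^{F₍₂₎}(g) = 2^{2m+1}, ∑_{g ∈ E(m)} χ^{F₍₃₎}(g) = 2^{2m+1}, and ∑_{g ∈ E(m)} tr(g) · χ^{F₍₂₎}(g) = 2^{2m+1}. Equivalently, ⟨χ^{F₍₂₎}, χ^{F₍₀₎}⟩ = ⟨χ^{F₍₃₎}, χ^{F₍₀₎}⟩ = ⟨χ^{F₍₁₎}, χ^{F₍₂₎}⟩ = 1, i.e. the weight-2 and weight-3 graded pieces of the Heisenberg representation each contain the trivial representation exactly once, and F₍₁₎ ⊗ F₍₂₎ contains the trivial representation exactly once. -/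
/-!
Every element of `E(m)` is `±P` for a Pauli string `P = σ_{v₁} ⊗ ⋯ ⊗ σ_{vₘ}`, and `P² = s • 1`
with a sign `s`. Hence `tr(g²) = s 2^m` and `tr(g³) = s tr g`, and pairing `P` with `-P` cancels
every term of odd degree in `tr g`. What remains are `∑ s = 2^m` and `∑ (tr P)² = 4^m`, and
both sums factor over the `m` tensor slots.
-/

open Matrix

/-- The type of `2^m × 2^m` real matrices, with rows and columns indexed by `𝔽₂^m`. -/
abbrev EMat (m : ℕ) := Matrix (Fin m → Fin 2) (Fin m → Fin 2) ℝ

/-- `pauliR 0 = 1₂`, `pauliR 1 = σ₁`, `pauliR 2 = σ₂`, `pauliR 3 = σ₃ = σ₁ σ₂`. -/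
noncomputable def pauliR : Fin 4 → Matrix (Fin 2) (Fin 2) ℝ :=
  ![1, !![0, 1; 1, 0], !![1, 0; 0, -1], !![0, 1; 1, 0] * !![1, 0; 0, -1]]

/-- The Kronecker (tensor) product of `m` matrices of size `2 × 2`. -/
noncomputable def kprod (m : ℕ) (f : Fin m → Matrix (Fin 2) (Fin 2) ℝ) : EMat m :=
  Matrix.of fun i j => ∏ a, f a (i a) (j a)

/-- The extraspecial group `E(m) = 2_+^{2m+1}`, realized as the set of matrices
`± σ_{i₁} ⊗ ⋯ ⊗ σ_{iₘ}` with each factor in `{1₂, σ₁, σ₂, σ₁σ₂}`. -/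
noncomputable def Esp (m : ℕ) : Finset (EMat m) :=
  @Finset.image _ _ (Classical.decEq _)
    (fun p : Bool × (Fin m → Fin 4) =>
      (if p.1 then (-1 : EMat m) else 1) * kprod m fun b => pauliR (p.2 b))
    Finset.univ

section

variable (m : ℕ)

lemma kprod_mul (f g : Fin m → Matrix (Fin 2) (Fin 2) ℝ) :
    kprod m f * kprod m g = kprod m fun a => f a * g a := by
  ext i j
  simp only [kprod, mul_apply, of_apply, ← Finset.prod_mul_distrib, Fintype.prod_sum]

lemma kprod_transpose (f : Fin m → Matrix (Fin 2) (Fin 2) ℝ) :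
    (kprod m f)ᵀ = kprod m fun a => (f a)ᵀ := by
  ext i j
  rfl

lemma trace_kprod (f : Fin m → Matrix (Fin 2) (Fin 2) ℝ) :
    (kprod m f).trace = ∏ a, (f a).trace := by
  simp only [trace, diag, kprod, of_apply, Fintype.prod_sum]

lemma kprod_one : kprod m (fun _ => 1) = 1 := by
  ext i j
  simp only [kprod, of_apply, one_apply, Fintype.prod_boole, funext_iff]
  congr

lemma kprod_smul (c : Fin m → ℝ) (f : Fin m → Matrix (Fin 2) (Fin 2) ℝ) :
    kprod m (fun a => c a • f a) = (∏ a, c a) • kprod m f := by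
  ext i j
  simp only [kprod, of_apply, Matrix.smul_apply, smul_eq_mul, Finset.prod_mul_distrib]

def pauliSign : Fin 4 → ℝ := ![1, 1, 1, -1]

lemma pauliR_mul_self (v : Fin 4) : pauliR v * pauliR v = pauliSign v • 1 := by
  fin_cases v <;> ext i j <;> fin_cases i <;> fin_cases j <;>
    norm_num [pauliR, pauliSign, mul_apply, Fin.sum_univ_two, one_apply]

lemma trace_transpose_pauliR_mul (u v : Fin 4) :
    ((pauliR u)ᵀ * pauliR v).trace = if u = v then 2 else 0 := by
  fin_cases u <;> fin_cases v <;>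
    norm_num [pauliR, trace_fin_two, mul_apply, Fin.sum_univ_two, one_apply, Fin.ext_iff]

lemma sum_trace_pauliR_sq : ∑ v, (pauliR v).trace ^ 2 = 4 := by
  norm_num [Fin.sum_univ_four, pauliR, trace_fin_two, cons_val_two, cons_val_three]

lemma sum_pauliSign : ∑ v, pauliSign v = 2 := by
  norm_num [Fin.sum_univ_four, pauliSign, cons_val_two, cons_val_three]

noncomputable def pauliString (f : Fin m → Fin 4) : EMat m :=
  kprod m fun a => pauliR (f a)

lemma pauliString_mul_self (f : Fin m → Fin 4) :
    pauliString m f * pauliString m f = (∏ a, pauliSign (f a)) • 1 := by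
  simp only [pauliString, kprod_mul, pauliR_mul_self, kprod_smul, kprod_one]

lemma trace_transpose_pauliString_mul (f g : Fin m → Fin 4) :
    ((pauliString m f)ᵀ * pauliString m g).trace = if f = g then 2 ^ m else 0 := by
  simp only [pauliString, kprod_transpose, kprod_mul, trace_kprod, trace_transpose_pauliR_mul,
    Finset.prod_ite_zero, Finset.prod_const, Finset.card_univ, Fintype.card_fin, funext_iff,
    Finset.mem_univ, true_implies]

lemma sum_trace_pauliString_sq : ∑ f, (pauliString m f).trace ^ 2 = 4 ^ m := by
  simp only [pauliString, trace_kprod, ← Finset.prod_pow]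
  rw [← Fintype.prod_sum fun _ v => (pauliR v).trace ^ 2]
  simp only [sum_trace_pauliR_sq, Finset.prod_const, Finset.card_univ, Fintype.card_fin]

lemma sum_prod_pauliSign : ∑ f : Fin m → Fin 4, ∏ a, pauliSign (f a) = 2 ^ m := by
  simp only [← Fintype.prod_sum, sum_pauliSign, Finset.prod_const, Finset.card_univ,
    Fintype.card_fin]

lemma eq_and_eq_of_smul_pauliString_eq {ε ε' : ℝ} (hε : ε ≠ 0) {f g : Fin m → Fin 4}
    (h : ε • pauliString m f = ε' • pauliString m g) : f = g ∧ ε = ε' := by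
  have hpair := congrArg (fun M => ((pauliString m f)ᵀ * M).trace) h
  simp only [Matrix.mul_smul, trace_smul, trace_transpose_pauliString_mul, smul_eq_mul] at hpair
  by_cases hfg : f = g
  · subst hfg
    exact ⟨rfl, by simpa using hpair⟩
  · simp [hfg, hε] at hpair

lemma sum_Esp (F : EMat m → ℝ) :
    ∑ g ∈ Esp m, F g = ∑ f, (F (pauliString m f) + F (-pauliString m f)) := by
  have hsign (b : Bool) (M : EMat m) :
      (if b then -1 else 1) * M = (if b then -1 else 1 : ℝ) • M := by
    cases b <;> simp
  have hinj : Function.Injective fun p : Bool × (Fin m → Fin 4) =>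
      (if p.1 then (-1 : EMat m) else 1) * pauliString m p.2 := by
    rintro ⟨b, f⟩ ⟨c, g⟩ h
    simp only [hsign] at h
    obtain ⟨rfl, hbc⟩ := eq_and_eq_of_smul_pauliString_eq m (by split <;> norm_num) h
    revert hbc
    cases b <;> cases c <;> norm_num
  rw [Esp]
  -- `Esp` builds its image with the instance `Classical.decEq`.
  refine (@Finset.sum_image _ _ _ _ _ (Classical.decEq _) _ _ hinj.injOn).trans ?_
  rw [Fintype.sum_prod_type_right]
  simp [pauliString, add_comm]

lemma trace_pauliString_sq (f : Fin m → Fin 4) :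
    (pauliString m f ^ 2).trace = (∏ a, pauliSign (f a)) * 2 ^ m := by
  simp [sq, pauliString_mul_self]

lemma trace_pauliString_pow_three (f : Fin m → Fin 4) :
    (pauliString m f ^ 3).trace = (∏ a, pauliSign (f a)) * (pauliString m f).trace := by
  rw [pow_succ, sq, pauliString_mul_self, smul_mul, one_mul, trace_smul, smul_eq_mul]

end

theorem esp_heisenberg_character_sums_general (m : ℕ) :
    ∑ g ∈ Esp m, (g.trace + (g ^ 2).trace / 2 + g.trace ^ 2 / 2) = 2 ^ (2 * m + 1) ∧
    ∑ g ∈ Esp m, (g.trace + (g ^ 3).trace / 3 + g.trace ^ 2 +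
      (g ^ 2).trace * g.trace / 2 + g.trace ^ 3 / 6) = 2 ^ (2 * m + 1) ∧
    ∑ g ∈ Esp m, g.trace * (g.trace + (g ^ 2).trace / 2 + g.trace ^ 2 / 2) =
      2 ^ (2 * m + 1) := by
  have hpow : (2 : ℝ) ^ (2 * m + 1) = 2 * 4 ^ m := by
    rw [pow_succ, pow_mul, mul_comm]; norm_num
  simp only [sum_Esp, trace_neg, neg_sq, Odd.neg_pow (by decide : Odd 3),
    trace_pauliString_sq, trace_pauliString_pow_three, hpow]
  refine ⟨?_, ?_, ?_⟩
  · calc _ = 2 ^ m * ∑ f : Fin m → Fin 4, ∏ a, pauliSign (f a) +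
          ∑ f, (pauliString m f).trace ^ 2 := by
          rw [Finset.mul_sum, ← Finset.sum_add_distrib]
          exact Finset.sum_congr rfl fun f _ => by ring
      _ = _ := by rw [sum_prod_pauliSign, sum_trace_pauliString_sq, ← mul_pow]; ring
  all_goals
    calc _ = 2 * ∑ f, (pauliString m f).trace ^ 2 := by
          rw [Finset.mul_sum]
          exact Finset.sum_congr rfl fun f _ => by ring
      _ = _ := by rw [sum_trace_pauliString_sq]

/-- For `m ≥ 2`: `∑_g χ^{F₍₂₎}(g) = ∑_g χ^{F₍₃₎}(g) = ∑_g tr(g) χ^{F₍₂₎}(g) = 2^(2m+1)`,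
where `χ^{F₍₂₎}(g) = tr g + tr(g²)/2 + (tr g)²/2` and
`χ^{F₍₃₎}(g) = tr g + tr(g³)/3 + (tr g)² + tr(g²) tr(g)/2 + (tr g)³/6`; i.e. the weight-2 and
weight-3 graded pieces of the Heisenberg representation each contain the trivial
representation exactly once, and `F₍₁₎ ⊗ F₍₂₎` contains it exactly once. -/
theorem esp_heisenberg_character_sums (m : ℕ) (hm : 2 ≤ m) :
    ∑ g ∈ Esp m, (g.trace + (g ^ 2).trace / 2 + g.trace ^ 2 / 2) = 2 ^ (2 * m + 1) ∧
    ∑ g ∈ Esp m, (g.trace + (g ^ 3).trace / 3 + g.trace ^ 2 +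
      (g ^ 2).trace * g.trace / 2 + g.trace ^ 3 / 6) = 2 ^ (2 * m + 1) ∧
    ∑ g ∈ Esp m, g.trace * (g.trace + (g ^ 2).trace / 2 + g.trace ^ 2 / 2) =
      2 ^ (2 * m + 1) :=
  esp_heisenberg_character_sums_general m
end
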